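/- arXiv:2211.04788 — 4 statements merged into one kernel-verified Lean document; each statement's English description precedes it below -/
import Mathlib

section
/- Let C be an n×n symmetric positive definite integer matrix with even diagonal (finite symmetric Cartan type), and let w, v ∈ ℤ_{≥0}^n be such that every entry of w − Cv is nonnegative (i.e. μ is dominant). Then for every nonzero integer vector u with 0 ≤ u ≤ v, one has u·(w − Cv) + u·(Cu) ≥ 2. -/
/-!
The first summand is a dot product of two nonnegative vectors. The second is the value of the
quadratic form of `C` at the nonzero integer vector `u`: it is positive by positive definiteness
and even because `C` is symmetric with even diagonal, hence at least `2`.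
-/

open Matrix

namespace Matrix

variable {ι : Type*} [Fintype ι]

/-- Modulo `2` the off-diagonal terms `x i * A i j * x j` cancel in pairs. -/
theorem dotProduct_mulVec_self_eq_zero_of_charTwo {R : Type*} [CommRing R] [CharP R 2]
    {A : Matrix ι ι R} (hA : A.IsSymm) (hdiag : ∀ i, A i i = 0) (x : ι → R) :
    x ⬝ᵥ A *ᵥ x = 0 := by
  have hsum : x ⬝ᵥ A *ᵥ x = ∑ p : ι × ι, x p.1 * A p.1 p.2 * x p.2 := by
    simp only [dotProduct, mulVec, Fintype.sum_prod_type, Finset.mul_sum, mul_assoc]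
  rw [hsum]
  refine Finset.sum_ninvolution Prod.swap (fun p => ?_) (fun p hp hswap => hp ?_)
    (fun _ => Finset.mem_univ _) Prod.swap_swap
  · rw [Prod.fst_swap, Prod.snd_swap, hA.apply p.1 p.2,
      show x p.2 * A p.1 p.2 * x p.1 = x p.1 * A p.1 p.2 * x p.2 by ring]
    exact CharTwo.add_self_eq_zero (x p.1 * A p.1 p.2 * x p.2)
  · obtain ⟨a, b⟩ := p
    obtain rfl : b = a := congrArg Prod.fst hswap
    simp [hdiag]

theorem intCast_dotProduct_mulVec {R : Type*} [CommRing R] (C : Matrix ι ι ℤ) (u v : ι → ℤ) :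
    ((u ⬝ᵥ C *ᵥ v : ℤ) : R) = (Int.cast ∘ u) ⬝ᵥ C.map Int.cast *ᵥ (Int.cast ∘ v) := by
  simp [dotProduct, mulVec]

theorem even_dotProduct_mulVec_self {C : Matrix ι ι ℤ} (hC : C.IsSymm)
    (hdiag : ∀ i, Even (C i i)) (u : ι → ℤ) : Even (u ⬝ᵥ C *ᵥ u) := by
  rw [← ZMod.intCast_eq_zero_iff_even, intCast_dotProduct_mulVec]
  exact dotProduct_mulVec_self_eq_zero_of_charTwo (hC.map Int.cast)
    (fun i => (hdiag i).intCast_zmod_two) _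

theorem dotProduct_mulVec_self_pos_of_map_intCast {C : Matrix ι ι ℤ}
    (hC : ∀ x : ι → ℝ, x ≠ 0 → 0 < x ⬝ᵥ (C.map (Int.cast : ℤ → ℝ)) *ᵥ x)
    {u : ι → ℤ} (hu : u ≠ 0) : 0 < u ⬝ᵥ C *ᵥ u := by
  have hu' : (Int.cast ∘ u : ι → ℝ) ≠ 0 := fun h =>
    hu (funext fun i => by simpa using congrFun h i)
  rw [← Int.cast_pos (R := ℝ), intCast_dotProduct_mulVec]
  exact hC _ hu'

end Matrix

theorem stmt_5_general {n : ℕ} (C : Matrix (Fin n) (Fin n) ℤ)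
    (hsymm : ∀ i j, C i j = C j i)
    (heven : ∀ i, Even (C i i))
    (hposdef : ∀ x : Fin n → ℝ, x ≠ 0 → 0 < x ⬝ᵥ (C.map (Int.cast : ℤ → ℝ)).mulVec x)
    (w v : Fin n → ℤ)
    (hdom : 0 ≤ w - C.mulVec v)
    (u : Fin n → ℤ) (hu : u ≠ 0) (hu0 : 0 ≤ u) :
    2 ≤ u ⬝ᵥ (w - C.mulVec v) + u ⬝ᵥ C.mulVec u := by
  have hdominant : 0 ≤ u ⬝ᵥ (w - C *ᵥ v) := dotProduct_nonneg_of_nonneg hu0 hdom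
  have hpos : 0 < u ⬝ᵥ C *ᵥ u := dotProduct_mulVec_self_pos_of_map_intCast hposdef hu
  obtain ⟨k, hk⟩ := even_dotProduct_mulVec_self (IsSymm.ext fun i j => hsymm j i) heven u
  omega

/-- In finite symmetric Cartan type (C symmetric positive definite with even diagonal),
dominance of `μ` (all entries of `w - Cv` nonnegative) implies the good condition:
`u·(w − Cv) + u·(Cu) ≥ 2` for all nonzero `0 ≤ u ≤ v`. -/
theorem stmt_5 {n : ℕ} (C : Matrix (Fin n) (Fin n) ℤ)
    (hsymm : ∀ i j, C i j = C j i)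
    (heven : ∀ i, Even (C i i))
    (hposdef : ∀ x : Fin n → ℝ, x ≠ 0 → 0 < x ⬝ᵥ (C.map (Int.cast : ℤ → ℝ)).mulVec x)
    (w v : Fin n → ℤ) (hw : 0 ≤ w) (hv : 0 ≤ v)
    (hdom : 0 ≤ w - C.mulVec v)
    (u : Fin n → ℤ) (hu : u ≠ 0) (hu0 : 0 ≤ u) (huv : u ≤ v) :
    2 ≤ u ⬝ᵥ (w - C.mulVec v) + u ⬝ᵥ C.mulVec u :=
  stmt_5_general C hsymm heven hposdef w v hdom u hu hu0
end

section
/- Let C be a symmetric positive semidefinite integer matrix with even diagonal whose kernel is spanned by δ ∈ ℤ_{>0}^n. Let w, v ∈ ℤ_{≥0}^n with all entries of w − Cv nonnegative and δ·(w − Cv) = 1 (level 1). Then for every nonzero integer u with 0 ≤ u ≤ v, u·(w − Cv) + u·(Cu) ≥ 1; moreover if δ ≤ v entrywise, then equality is attained at u = δ. -/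
/-!
With `μ = w - C v`, both terms are nonnegative: `u ⬝ᵥ μ` because `μ` is dominant and
`u ⬝ᵥ C u` because `C` is positive semidefinite. Being integers, their sum is at least `1`
unless both vanish. But for a positive semidefinite form `u ⬝ᵥ C u = 0` forces `C u = 0`,
so `u` is a positive rational multiple of `δ` and `u ⬝ᵥ μ` is that multiple of `δ ⬝ᵥ μ = 1`.
Since `C δ = 0`, at `u = δ` the sum is exactly `δ ⬝ᵥ μ = 1`.
-/

open Matrix

namespace Matrix

variable {n : Type*} [Fintype n]

section IntCast

variable {R : Type*} [Ring R] (C : Matrix n n ℤ) (u u' : n → ℤ)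

lemma map_intCast_mulVec :
    C.map (Int.cast : ℤ → R) *ᵥ (fun i => (u i : R)) = fun i => ((C *ᵥ u) i : R) :=
  funext fun i => ((Int.castRingHom R).map_mulVec C u i).symm

lemma intCast_dotProduct_mulVec_s7 :
    ((u ⬝ᵥ C *ᵥ u' : ℤ) : R) = (fun i => (u i : R)) ⬝ᵥ C.map Int.cast *ᵥ fun i => (u' i : R) := by
  rw [map_intCast_mulVec]
  exact (Int.castRingHom R).map_dotProduct u (C *ᵥ u')

lemma map_intCast_mulVec_eq_zero_iff [CharZero R] :
    C.map (Int.cast : ℤ → R) *ᵥ (fun i => (u i : R)) = 0 ↔ C *ᵥ u = 0 := by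
  simp only [map_intCast_mulVec, funext_iff, Pi.zero_apply, Int.cast_eq_zero]

end IntCast

lemma posSemidef_map_intCast {C : Matrix n n ℤ} (hsymm : ∀ i j, C i j = C j i)
    (hpsd : ∀ x : n → ℝ, 0 ≤ x ⬝ᵥ C.map Int.cast *ᵥ x) :
    (C.map (Int.cast : ℤ → ℝ)).PosSemidef :=
  .of_dotProduct_mulVec_nonneg (by ext i j; simp [hsymm i j]) hpsd

section PosSemidef

variable {C : Matrix n n ℤ} (hC : (C.map (Int.cast : ℤ → ℝ)).PosSemidef) (u : n → ℤ)
include hC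

lemma dotProduct_mulVec_self_nonneg_of_posSemidef_map_intCast : 0 ≤ u ⬝ᵥ C *ᵥ u := by
  have h := hC.dotProduct_mulVec_nonneg fun i => (u i : ℝ)
  rw [star_trivial, ← intCast_dotProduct_mulVec_s7] at h
  exact_mod_cast h

lemma mulVec_eq_zero_of_posSemidef_map_intCast (hu : u ⬝ᵥ C *ᵥ u = 0) : C *ᵥ u = 0 := by
  rw [← map_intCast_mulVec_eq_zero_iff (R := ℝ), ← hC.dotProduct_mulVec_zero_iff, star_trivial,
    ← intCast_dotProduct_mulVec_s7, hu, Int.cast_zero]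

end PosSemidef

lemma dotProduct_pos_of_mulVec_eq_zero {C : Matrix n n ℤ} {δ μ u : n → ℤ}
    (hδ : ∀ i, 0 < δ i)
    (hker : ∀ x : n → ℚ, C.map Int.cast *ᵥ x = 0 → ∃ c : ℚ, x = c • fun i => (δ i : ℚ))
    (hδμ : 0 < δ ⬝ᵥ μ) (hCu : C *ᵥ u = 0) (hu : 0 ≤ u) (hu0 : u ≠ 0) : 0 < u ⬝ᵥ μ := by
  obtain ⟨c, hc⟩ := hker _ ((map_intCast_mulVec_eq_zero_iff C u).2 hCu)
  obtain ⟨i, hi⟩ := Function.ne_iff.mp hu0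
  have hcomp (j : n) : (u j : ℚ) = c * δ j := by simpa using congrFun hc j
  have hc_pos : 0 < c := by
    have hui : (0 : ℚ) < u i := by exact_mod_cast (hu i).lt_of_ne' hi
    have hδi : (0 : ℚ) < δ i := by exact_mod_cast hδ i
    rw [hcomp i] at hui
    exact pos_of_mul_pos_left hui hδi.le
  have huμ : ((u ⬝ᵥ μ : ℤ) : ℚ) = c * (δ ⬝ᵥ μ : ℤ) := by
    simp only [dotProduct, Int.cast_sum, Int.cast_mul, hcomp, Finset.mul_sum, mul_assoc]
  have : (0 : ℚ) < (u ⬝ᵥ μ : ℤ) := by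
    rw [huμ]
    exact mul_pos hc_pos (by exact_mod_cast hδμ)
  exact_mod_cast this

end Matrix

theorem stmt_7_general {n : ℕ} (C : Matrix (Fin n) (Fin n) ℤ)
    (hsymm : ∀ i j, C i j = C j i)
    (hpsd : ∀ x : Fin n → ℝ, 0 ≤ x ⬝ᵥ (C.map (Int.cast : ℤ → ℝ)).mulVec x)
    (δ : Fin n → ℤ) (hδpos : ∀ i, 0 < δ i)
    (hker : ∀ x : Fin n → ℚ,
      (C.map (Int.cast : ℤ → ℚ)).mulVec x = 0 ↔ ∃ c : ℚ, x = c • fun i => (δ i : ℚ))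
    (w v : Fin n → ℤ)
    (hdom : 0 ≤ w - C.mulVec v)
    (hlevel : δ ⬝ᵥ (w - C.mulVec v) = 1) :
    (∀ u : Fin n → ℤ, u ≠ 0 → 0 ≤ u → u ≤ v →
        1 ≤ u ⬝ᵥ (w - C.mulVec v) + u ⬝ᵥ C.mulVec u) ∧
      (δ ≤ v → δ ⬝ᵥ (w - C.mulVec v) + δ ⬝ᵥ C.mulVec δ = 1) := by
  have hC := posSemidef_map_intCast hsymm hpsd
  have hCδ : C *ᵥ δ = 0 :=
    (map_intCast_mulVec_eq_zero_iff (R := ℚ) C δ).1 ((hker _).2 ⟨1, (one_smul _ _).symm⟩)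
  refine ⟨fun u hu0 hu _ => ?_, fun _ => by rw [hCδ, dotProduct_zero, hlevel, add_zero]⟩
  have hμ : 0 ≤ u ⬝ᵥ (w - C *ᵥ v) := dotProduct_nonneg_of_nonneg hu hdom
  obtain hq | hq := (dotProduct_mulVec_self_nonneg_of_posSemidef_map_intCast hC u).eq_or_lt
  · have := dotProduct_pos_of_mulVec_eq_zero hδpos (fun x => (hker x).1) (hlevel ▸ one_pos)
      (mulVec_eq_zero_of_posSemidef_map_intCast hC u hq.symm) hu hu0
    omega
  · omega

/-- In affine symmetric type at level 1, a dominant `μ` satisfies the conicity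
condition (`≥ 1` for all nonzero `0 ≤ u ≤ v`), and if `δ ≤ v` the bound `1` is
attained at `u = δ`, so the good condition fails. -/
theorem stmt_7 {n : ℕ} (C : Matrix (Fin n) (Fin n) ℤ)
    (hsymm : ∀ i j, C i j = C j i)
    (heven : ∀ i, Even (C i i))
    (hpsd : ∀ x : Fin n → ℝ, 0 ≤ x ⬝ᵥ (C.map (Int.cast : ℤ → ℝ)).mulVec x)
    (δ : Fin n → ℤ) (hδpos : ∀ i, 0 < δ i)
    (hker : ∀ x : Fin n → ℚ,
      (C.map (Int.cast : ℤ → ℚ)).mulVec x = 0 ↔ ∃ c : ℚ, x = c • fun i => (δ i : ℚ))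
    (w v : Fin n → ℤ) (hw : 0 ≤ w) (hv : 0 ≤ v)
    (hdom : 0 ≤ w - C.mulVec v)
    (hlevel : δ ⬝ᵥ (w - C.mulVec v) = 1) :
    (∀ u : Fin n → ℤ, u ≠ 0 → 0 ≤ u → u ≤ v →
        1 ≤ u ⬝ᵥ (w - C.mulVec v) + u ⬝ᵥ C.mulVec u) ∧
      (δ ≤ v → δ ⬝ᵥ (w - C.mulVec v) + δ ⬝ᵥ C.mulVec δ = 1) :=
  stmt_7_general C hsymm hpsd δ hδpos hker w v hdom hlevel
end

section
/- Let k be a field and A = k[u^{±1}, w] with the grading for which monopole operators are indexed by γ ∈ ℤ. In the rank-one torus Coulomb branch A(T, N) with T = GL_1 and N a T-representation with weights ξ_1,…,ξ_d ∈ ℤ (multiplicities counted), the 'forgetting matter' map z*: A(T, N) → A(T, 0) defined on basis elements by r_γ ↦ (∏_{j: ξ_j γ < 0} (ξ_j w)^{−ξ_j γ}) r_γ and H•_T(pt)-linearly, is an injective algebra homomorphism, given the multiplication rule in A(T,N): r_γ · r_{γ'} = (∏_{j: ξ_jγ, ξ_jγ' have opposite signs} (ξ_j w)^{min(|ξ_jγ|,|ξ_jγ'|)})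 r_{γ+γ'} and in A(T,0): r_γ · r_{γ'} = r_{γ+γ'}. -/
/-!
`z*` sends `r_γ` to `zfac γ · r^γ`, so it is injective as soon as every `zfac γ` is a nonzero
polynomial, which holds in characteristic zero. Multiplicativity reduces to basis elements and
there, weight by weight, to the exponent identity
`[ξγ, ξγ' of opposite signs] · min(|ξγ|, |ξγ'|) + (ξ(γ+γ'))⁻ = (ξγ)⁻ + (ξγ')⁻`,
where `a⁻ = max(-a, 0)`.
-/

open Finset Polynomial

/-- The BFN multiplication on the rank-one torus Coulomb branch `A(T, N)`:
`r_γ · r_{γ'} = (∏_{j : ξ_jγ, ξ_jγ' opposite signs} (ξ_j w)^{min(|ξ_jγ|,|ξ_jγ'|)}) r_{γ+γ'}`,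
extended `k[w]`-bilinearly on the free module `ℤ →₀ k[w]` with basis `{r_γ}`. -/
noncomputable def bfnMul {k : Type*} [Field k] {d : ℕ} (ξ : Fin d → ℤ)
    (x y : ℤ →₀ Polynomial k) : ℤ →₀ Polynomial k :=
  x.sum fun γ p => y.sum fun γ' q =>
    Finsupp.single (γ + γ')
      (p * q * ∏ j, if (ξ j * γ < 0 ∧ 0 < ξ j * γ') ∨ (0 < ξ j * γ ∧ ξ j * γ' < 0)
        then ((ξ j : Polynomial k) * X) ^ (min |ξ j * γ| |ξ j * γ'|).toNat else 1)

/-- The factor `∏_{j : ξ_j γ < 0} (ξ_j w)^{−ξ_j γ}` appearing in the forgetting-matter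
map `z*(r_γ)`. -/
noncomputable def zfac {k : Type*} [Field k] {d : ℕ} (ξ : Fin d → ℤ) (γ : ℤ) :
    Polynomial k :=
  ∏ j, if ξ j * γ < 0 then ((ξ j : Polynomial k) * X) ^ (-(ξ j * γ)).toNat else 1

/-- The forgetting-matter map `z* : A(T,N) → A(T,0) = k[w][r,r⁻¹]`,
`r_γ ↦ zfac(γ) · r^γ`, extended `k[w]`-linearly; the target is the Laurent
polynomial ring over `k[w]`. -/
noncomputable def zstar {k : Type*} [Field k] {d : ℕ} (ξ : Fin d → ℤ)
    (x : ℤ →₀ Polynomial k) : LaurentPolynomial (Polynomial k) :=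
  x.sum fun γ p => LaurentPolynomial.C (p * zfac ξ γ) * LaurentPolynomial.T γ

/-- The structure constant of `A(T, N)`: `r_γ · r_{γ'} = bfnCoeff ξ γ γ' · r_{γ+γ'}`. -/
noncomputable def bfnCoeff {k : Type*} [Field k] {d : ℕ} (ξ : Fin d → ℤ) (γ γ' : ℤ) :
    Polynomial k :=
  ∏ j, if (ξ j * γ < 0 ∧ 0 < ξ j * γ') ∨ (0 < ξ j * γ ∧ ξ j * γ' < 0)
    then ((ξ j : Polynomial k) * X) ^ (min |ξ j * γ| |ξ j * γ'|).toNat else 1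

lemma ite_pow_eq_pow_ite {M : Type*} [Monoid M] (P : Prop) [Decidable P] (x : M) (n : ℕ) :
    (if P then x ^ n else 1) = x ^ (if P then n else 0) := by
  split_ifs <;> simp

lemma ite_min_abs_add_ite_neg_add (a b : ℤ) :
    (if (a < 0 ∧ 0 < b) ∨ (0 < a ∧ b < 0) then (min |a| |b|).toNat else 0) +
        (if a + b < 0 then (-(a + b)).toNat else 0) =
      (if a < 0 then (-a).toNat else 0) + (if b < 0 then (-b).toNat else 0) := by
  simp only [Int.abs_eq_natAbs]
  split_ifs <;> omega

lemma ite_pow_min_abs_mul_ite_pow_neg {M : Type*} [Monoid M] (x : M) (a b : ℤ) :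
    (if (a < 0 ∧ 0 < b) ∨ (0 < a ∧ b < 0) then x ^ (min |a| |b|).toNat else 1) *
        (if a + b < 0 then x ^ (-(a + b)).toNat else 1) =
      (if a < 0 then x ^ (-a).toNat else 1) * (if b < 0 then x ^ (-b).toNat else 1) := by
  simp only [ite_pow_eq_pow_ite, ← pow_add, ite_min_abs_add_ite_neg_add]

section zstar

variable {k : Type*} [Field k] {d : ℕ} (ξ : Fin d → ℤ)

lemma bfnMul_eq_sum_sum (x y : ℤ →₀ Polynomial k) :
    bfnMul ξ x y =
      x.sum fun γ p => y.sum fun γ' q => Finsupp.single (γ + γ') (p * q * bfnCoeff ξ γ γ') :=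
  rfl

lemma bfnCoeff_mul_zfac (γ γ' : ℤ) :
    bfnCoeff (k := k) ξ γ γ' * zfac ξ (γ + γ') = zfac ξ γ * zfac ξ γ' := by
  simp only [bfnCoeff, zfac, ← Finset.prod_mul_distrib, mul_add]
  exact Finset.prod_congr rfl fun j _ => ite_pow_min_abs_mul_ite_pow_neg _ _ _

lemma zfac_zero : zfac (k := k) ξ 0 = 1 := by
  simp [zfac]

lemma zfac_ne_zero [CharZero k] (γ : ℤ) : zfac (k := k) ξ γ ≠ 0 := by
  refine Finset.prod_ne_zero_iff.mpr fun j _ => ?_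
  split_ifs with h
  · have hξ : ξ j ≠ 0 := by rintro h0; simp [h0] at h
    exact pow_ne_zero _ (mul_ne_zero (Int.cast_ne_zero.mpr hξ) X_ne_zero)
  · exact one_ne_zero

lemma zstar_single (γ : ℤ) (p : Polynomial k) :
    zstar ξ (Finsupp.single γ p) =
      LaurentPolynomial.C (p * zfac ξ γ) * LaurentPolynomial.T γ := by
  simp [zstar]

lemma zstar_add (x y : ℤ →₀ Polynomial k) :
    zstar ξ (x + y) = zstar ξ x + zstar ξ y := by
  unfold zstar
  rw [Finsupp.sum_add_index] <;> simp [add_mul]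

lemma zstar_smul (c : Polynomial k) (x : ℤ →₀ Polynomial k) :
    zstar ξ (c • x) = LaurentPolynomial.C c * zstar ξ x := by
  unfold zstar
  rw [Finsupp.sum_smul_index (by simp), Finsupp.mul_sum]
  refine Finsupp.sum_congr fun γ _ => ?_
  rw [mul_assoc c, map_mul, mul_assoc]

lemma zstar_finsuppSum {α M : Type*} [Zero M] (s : α →₀ M) (g : α → M → ℤ →₀ Polynomial k) :
    zstar ξ (s.sum g) = s.sum fun a m => zstar ξ (g a m) :=
  map_finsuppSum (AddMonoidHom.mk' (zstar ξ) (zstar_add ξ)) s g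

lemma coeff_zstar (x : ℤ →₀ Polynomial k) (γ : ℤ) :
    (zstar ξ x).coeff γ = x γ * zfac ξ γ := by
  induction x using Finsupp.induction_linear with
  | zero => simp [zstar]
  | add a b ha hb =>
    rw [zstar_add, AddMonoidAlgebra.coeff_add, Finsupp.add_apply, Finsupp.add_apply, ha, hb,
      add_mul]
  | single γ' p =>
    rw [zstar_single, ← LaurentPolynomial.single_eq_C_mul_T, AddMonoidAlgebra.coeff_single,
      Finsupp.single_apply, Finsupp.single_apply]
    split_ifs with h
    · rw [h]
    · rw [zero_mul]

lemma zstar_injective [CharZero k] : Function.Injective (zstar (k := k) ξ) := by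
  intro x y h
  refine Finsupp.ext fun γ => ?_
  have hγ := congrArg (fun f => AddMonoidAlgebra.coeff f γ) h
  simp only [coeff_zstar] at hγ
  exact mul_right_cancel₀ (zfac_ne_zero ξ γ) hγ

lemma zstar_bfnMul (x y : ℤ →₀ Polynomial k) :
    zstar ξ (bfnMul ξ x y) = zstar ξ x * zstar ξ y := by
  have on_basis : ∀ γ γ' (p q : Polynomial k),
      zstar ξ (Finsupp.single (γ + γ') (p * q * bfnCoeff ξ γ γ')) =
        LaurentPolynomial.C (p * zfac ξ γ) * LaurentPolynomial.T γ *
          (LaurentPolynomial.C (q * zfac ξ γ') * LaurentPolynomial.T γ') := by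
    intro γ γ' p q
    rw [zstar_single, mul_assoc (p * q), bfnCoeff_mul_zfac, LaurentPolynomial.T_add,
      mul_mul_mul_comm p q, map_mul]
    ring
  simp only [bfnMul_eq_sum_sum, zstar_finsuppSum, on_basis]
  rw [zstar, zstar, Finsupp.sum_mul]
  simp only [Finsupp.mul_sum]

end zstar

/-- The forgetting-matter map `z* : A(T,N) → A(T,0)` for the rank-one torus is an
injective algebra homomorphism (unital, additive, `k[w]`-linear, multiplicative for
the BFN multiplication rules). -/
theorem stmt_15 {k : Type*} [Field k] [CharZero k] {d : ℕ} (ξ : Fin d → ℤ) :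
    Function.Injective (zstar (k := k) ξ) ∧
      zstar (k := k) ξ (Finsupp.single 0 1) = 1 ∧
      (∀ x y : ℤ →₀ Polynomial k, zstar ξ (x + y) = zstar ξ x + zstar ξ y) ∧
      (∀ (c : Polynomial k) (x : ℤ →₀ Polynomial k),
        zstar ξ (c • x) = LaurentPolynomial.C c * zstar ξ x) ∧
      (∀ x y : ℤ →₀ Polynomial k, zstar ξ (bfnMul ξ x y) = zstar ξ x * zstar ξ y) := by
  refine ⟨zstar_injective ξ, ?_, zstar_add ξ, zstar_smul ξ, zstar_bfnMul ξ⟩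
  rw [zstar_single, zfac_zero, one_mul, map_one, one_mul, LaurentPolynomial.T_zero]
end

section
/- With notation as above for the rank-one torus T = GL_1 and T-representation N with integer weights ξ_1,…,ξ_d, the Fourier transform F: A(T, N) → A(T, N*) defined by F(r_γ) = (−1)^{∑_{j: ξ_j γ > 0} ξ_j γ} r_γ and H•_T(pt)-linearity is an algebra isomorphism, where N* has weights −ξ_1,…,−ξ_d. -/
open Finset Polynomial

/-- The Fourier transform `F : A(T,N) → A(T,N*)`, defined on basis elements by
`F(r_γ) = (−1)^{∑_{j : ξ_j γ > 0} ξ_j γ} r_γ` and extended `k[w]`-linearly. -/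
noncomputable def bfnFourier {k : Type*} [Field k] {d : ℕ} (ξ : Fin d → ℤ)
    (x : ℤ →₀ Polynomial k) : ℤ →₀ Polynomial k :=
  x.sum fun γ p =>
    Finsupp.single γ
      ((-1 : Polynomial k) ^ (∑ j, if 0 < ξ j * γ then (ξ j * γ).toNat else 0) * p)

/-!
Everything is `k[w]`-linear, so it suffices to compare `F (r_γ r_γ')` with `F r_γ · F r_γ'`,
one weight at a time. For `a = ξ_j γ`, `b = ξ_j γ'`, replacing `ξ_j` by `-ξ_j` changes the factor
`(ξ_j w)^{min(|a|,|b|)}` by the sign `(-1)^{min(|a|,|b|)}` exactly when `a` and `b` have opposite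
signs, and `(a+b)⁺ + [a, b opposite] min(|a|,|b|) ≡ a⁺ + b⁺ (mod 2)`, so these signs are absorbed
by the Fourier signs. Since the Fourier sign squares to `1`, `F` is an involution.
-/

lemma Int.toNat_add_add_crossing_mod_two (a b : ℤ) :
    ((a + b).toNat + if (a < 0 ∧ 0 < b) ∨ (0 < a ∧ b < 0) then (min |a| |b|).toNat else 0) % 2 =
      (a.toNat + b.toNat) % 2 := by
  split_ifs <;> grind

section Signs

variable {R : Type*} [CommRing R] {d : ℕ} (ξ : Fin d → ℤ)

-- `Int.toNat` is the positive part, so this is `(-1)^{∑_{ξ_j γ > 0} ξ_j γ}`.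
noncomputable def fourierSign (γ : ℤ) : R[X] :=
  (-1) ^ ∑ j, (ξ j * γ).toNat

lemma fourierSign_mul_self (γ : ℤ) : (fourierSign ξ γ : R[X]) * fourierSign ξ γ = 1 := by
  rw [fourierSign, ← pow_add]
  exact Even.neg_one_pow (Even.add_self _)

noncomputable def crossingFactor (c a b : ℤ) : R[X] :=
  if (a < 0 ∧ 0 < b) ∨ (0 < a ∧ b < 0) then ((c : R[X]) * X) ^ (min |a| |b|).toNat else 1

lemma crossingFactor_neg (c a b : ℤ) :
    (crossingFactor (-c) (-a) (-b) : R[X]) =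
      (-1) ^ (if (a < 0 ∧ 0 < b) ∨ (0 < a ∧ b < 0) then (min |a| |b|).toNat else 0) *
        crossingFactor c a b := by
  have hopp : ((-a < 0 ∧ 0 < -b) ∨ (0 < -a ∧ -b < 0)) ↔ ((a < 0 ∧ 0 < b) ∨ (0 < a ∧ b < 0)) := by
    omega
  simp only [crossingFactor, hopp, abs_neg]
  split_ifs
  · rw [Int.cast_neg, neg_mul, neg_pow]
  · rw [pow_zero, one_mul]

lemma neg_one_pow_toNat_add_mul_crossingFactor (c a b : ℤ) :
    (-1) ^ (a + b).toNat * (crossingFactor c a b : R[X]) =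
      (-1) ^ a.toNat * (-1) ^ b.toNat * crossingFactor (-c) (-a) (-b) := by
  rw [crossingFactor_neg, ← mul_assoc]
  congr 1
  rw [← pow_add, ← pow_add, neg_one_pow_eq_pow_mod_two, neg_one_pow_eq_pow_mod_two (_ + _)]
  have := Int.toNat_add_add_crossing_mod_two a b
  congr 1
  omega

lemma fourierSign_add_mul_prod_crossingFactor (γ γ' : ℤ) :
    (fourierSign ξ (γ + γ') : R[X]) * ∏ j, crossingFactor (ξ j) (ξ j * γ) (ξ j * γ') =
      fourierSign ξ γ * fourierSign ξ γ' * ∏ j, crossingFactor (-ξ j) (-ξ j * γ) (-ξ j * γ') := by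
  simp only [fourierSign, ← prod_pow_eq_pow_sum, ← prod_mul_distrib, mul_add, neg_mul]
  exact prod_congr rfl fun j _ => neg_one_pow_toNat_add_mul_crossingFactor _ _ _

end Signs

section FourierTransform

variable {k : Type*} [Field k] {d : ℕ} (ξ : Fin d → ℤ)

lemma bfnFourier_apply (x : ℤ →₀ k[X]) (γ : ℤ) :
    bfnFourier ξ x γ = fourierSign ξ γ * x γ := by
  have hsign : ∀ a : ℤ, (if 0 < a then a.toNat else 0) = a.toNat := fun a => by
    split_ifs <;> omega
  rw [bfnFourier, Finsupp.sum_apply, Finsupp.sum_eq_single γ]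
  · simp only [Finsupp.single_eq_same, hsign, fourierSign]
  · intro γ' _ hγ'
    exact Finsupp.single_eq_of_ne hγ'.symm
  · simp

lemma bfnFourier_single (γ : ℤ) (p : k[X]) :
    bfnFourier ξ (Finsupp.single γ p) = Finsupp.single γ (fourierSign ξ γ * p) := by
  ext γ'
  rw [bfnFourier_apply, Finsupp.single_apply, Finsupp.single_apply]
  split_ifs with h
  · rw [h]
  · rw [mul_zero]

lemma bfnFourier_zero : bfnFourier (k := k) ξ 0 = 0 := Finsupp.sum_zero_index

lemma bfnFourier_add (x y : ℤ →₀ k[X]) :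
    bfnFourier ξ (x + y) = bfnFourier ξ x + bfnFourier ξ y := by
  ext γ
  simp [bfnFourier_apply, mul_add]

lemma bfnFourier_smul (c : k[X]) (x : ℤ →₀ k[X]) :
    bfnFourier ξ (c • x) = c • bfnFourier ξ x := by
  ext γ
  simp [bfnFourier_apply, mul_left_comm]

lemma bfnFourier_involutive : Function.Involutive (bfnFourier (k := k) ξ) := fun x => by
  ext γ
  simp [bfnFourier_apply, ← mul_assoc, fourierSign_mul_self]

lemma bfnMul_single (γ γ' : ℤ) (p q : k[X]) :
    bfnMul ξ (Finsupp.single γ p) (Finsupp.single γ' q) =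
      Finsupp.single (γ + γ') (p * q * ∏ j, crossingFactor (ξ j) (ξ j * γ) (ξ j * γ')) := by
  rw [bfnMul, Finsupp.sum_single_index (by simp), Finsupp.sum_single_index (by simp)]
  rfl

lemma bfnMul_zero_left (y : ℤ →₀ k[X]) : bfnMul ξ 0 y = 0 := Finsupp.sum_zero_index

lemma bfnMul_zero_right (x : ℤ →₀ k[X]) : bfnMul ξ x 0 = 0 := by
  simp [bfnMul]

lemma bfnMul_add_left (x x' y : ℤ →₀ k[X]) :
    bfnMul ξ (x + x') y = bfnMul ξ x y + bfnMul ξ x' y := by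
  refine Finsupp.sum_add_index' (fun _ => by simp) fun _ _ _ => ?_
  rw [← Finsupp.sum_add]
  exact Finsupp.sum_congr fun _ _ => by rw [add_mul, add_mul, Finsupp.single_add]

lemma bfnMul_add_right (x y y' : ℤ →₀ k[X]) :
    bfnMul ξ x (y + y') = bfnMul ξ x y + bfnMul ξ x y' := by
  rw [bfnMul, bfnMul, bfnMul, ← Finsupp.sum_add]
  refine Finsupp.sum_congr fun _ _ => ?_
  exact Finsupp.sum_add_index' (fun _ => by simp) fun _ _ _ => by
    rw [mul_add, add_mul, Finsupp.single_add]

lemma bfnFourier_bfnMul_single (γ γ' : ℤ) (p q : k[X]) :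
    bfnFourier ξ (bfnMul ξ (Finsupp.single γ p) (Finsupp.single γ' q)) =
      bfnMul (fun j => -ξ j) (bfnFourier ξ (Finsupp.single γ p))
        (bfnFourier ξ (Finsupp.single γ' q)) := by
  rw [bfnMul_single, bfnFourier_single, bfnFourier_single, bfnFourier_single, bfnMul_single]
  congr 1
  linear_combination p * q * fourierSign_add_mul_prod_crossingFactor (R := k) ξ γ γ'

lemma bfnFourier_bfnMul (x y : ℤ →₀ k[X]) :
    bfnFourier ξ (bfnMul ξ x y) = bfnMul (fun j => -ξ j) (bfnFourier ξ x) (bfnFourier ξ y) := by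
  induction x using Finsupp.induction_linear with
  | zero => rw [bfnMul_zero_left, bfnFourier_zero, bfnMul_zero_left]
  | add x x' hx hx' =>
    rw [bfnMul_add_left, bfnFourier_add, bfnFourier_add, hx, hx', bfnMul_add_left]
  | single γ p =>
    induction y using Finsupp.induction_linear with
    | zero => rw [bfnMul_zero_right, bfnFourier_zero, bfnMul_zero_right]
    | add y y' hy hy' =>
      rw [bfnMul_add_right, bfnFourier_add, bfnFourier_add, hy, hy', bfnMul_add_right]
    | single γ' q => exact bfnFourier_bfnMul_single ξ γ γ' p q

end FourierTransform

/-- The Fourier transform `F : A(T,N) → A(T,N*)` is an algebra isomorphism, where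
`N*` has weights `−ξ_j`: it is bijective, unital, additive, `k[w]`-linear, and
intertwines the BFN multiplication for `ξ` with that for `−ξ`. -/
theorem stmt_16 {k : Type*} [Field k] {d : ℕ} (ξ : Fin d → ℤ) :
    Function.Bijective (bfnFourier (k := k) ξ) ∧
      bfnFourier (k := k) ξ (Finsupp.single 0 1) = Finsupp.single 0 1 ∧
      (∀ x y : ℤ →₀ Polynomial k, bfnFourier ξ (x + y) = bfnFourier ξ x + bfnFourier ξ y) ∧
      (∀ (c : Polynomial k) (x : ℤ →₀ Polynomial k),
        bfnFourier ξ (c • x) = c • bfnFourier ξ x) ∧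
      (∀ x y : ℤ →₀ Polynomial k,
        bfnFourier ξ (bfnMul ξ x y) = bfnMul (fun j => -ξ j) (bfnFourier ξ x) (bfnFourier ξ y)) := by
  refine ⟨(bfnFourier_involutive ξ).bijective, ?_, bfnFourier_add ξ, bfnFourier_smul ξ,
    bfnFourier_bfnMul ξ⟩
  simp [bfnFourier_single, fourierSign]
end
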